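/- arXiv:1011.5266 — 4 statements merged into one kernel-verified Lean document; each statement's English description precedes it below -/
import Mathlib

section
/- Let G be a group acting on the right on a set X with basepoint x₀ whose orbit x₀·G is infinite, and let S generate G as a monoid. Then the inverted orbit growth function Δ(n) = max{δ(w) : |w| = n} satisfies Δ(n(n-1)/2) ≥ n for all n ≥ 1; in particular Δ(n) ≳ √n. -/
open Classical in
/-- The size `δ(w)` of the inverted orbit of the word `w`, for a right action
`act` of `G` on `X` and basepoint `x₀`. -/
noncomputable def invOrbSize {G X : Type*} [Group G] (act : X → G → X) (x₀ : X)
    (w : List G) : ℕ :=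
  ((Finset.range (w.length + 1)).image fun i => act x₀ ((w.drop i).prod)).card

/-- The inverted orbit growth function `Δ(n)`, the supremum of `δ(w)` over
words `w` of length `n` with letters in `S`. -/
noncomputable def invOrbGrowth {G X : Type*} [Group G] (act : X → G → X) (x₀ : X)
    (S : Set G) (n : ℕ) : ℕ :=
  sSup {k | ∃ w : List G, (∀ g ∈ w, g ∈ S) ∧ w.length = n ∧ k = invOrbSize act x₀ w}

/-!
If a word `w` has inverted orbit `F` with `#F = k`, prepending a word `v` keeps `F` and adds the
point `x₀ · v w`, which is new as soon as `x₀ · v ∉ F · w⁻¹`. Because the orbit of `x₀` is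
infinite, the balls of radius `j` in the Schreier graph of `x₀` grow strictly until they exhaust
the orbit, so the ball of radius `k` escapes every set of `k` points and such a `v` exists with
`|v| ≤ k`. Starting from the empty word and repeating this, a word of length
`1 + 2 + ⋯ + (n - 1)` reaches an inverted orbit of size `n`.
-/

open Classical in
/-- `invOrbSize act x₀ w` is definitionally `(invOrbit act x₀ w).card`. -/
noncomputable def invOrbit {G X : Type*} [Group G] (act : X → G → X) (x₀ : X)
    (w : List G) : Finset X :=
  (Finset.range (w.length + 1)).image fun i => act x₀ ((w.drop i).prod)

def reachBall {G X : Type*} [Group G] (act : X → G → X) (x₀ : X) (S : Set G) (j : ℕ) :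
    Set X :=
  {x | ∃ v : List G, (∀ g ∈ v, g ∈ S) ∧ v.length ≤ j ∧ act x₀ v.prod = x}

section

open Classical

variable {G X : Type*} [Group G] {act : X → G → X} {x₀ : X} {S : Set G}

theorem act_prod_mem_invOrbit (w : List G) : act x₀ w.prod ∈ invOrbit act x₀ w :=
  Finset.mem_image.2 ⟨0, by simp, by simp⟩

theorem invOrbit_subset_append (v w : List G) : invOrbit act x₀ w ⊆ invOrbit act x₀ (v ++ w) := by
  intro x hx
  obtain ⟨i, hi, rfl⟩ := Finset.mem_image.1 hx
  refine Finset.mem_image.2 ⟨v.length + i, ?_, ?_⟩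
  · simp only [Finset.mem_range, List.length_append] at hi ⊢
    omega
  · simp [List.drop_append, List.drop_eq_nil_of_le (Nat.le_add_right _ _)]

theorem invOrbSize_le_append (v w : List G) : invOrbSize act x₀ w ≤ invOrbSize act x₀ (v ++ w) :=
  Finset.card_le_card (invOrbit_subset_append v w)

theorem invOrbSize_le_length_succ (w : List G) : invOrbSize act x₀ w ≤ w.length + 1 :=
  Finset.card_image_le.trans (by simp)

theorem invOrbSize_le_invOrbGrowth {w : List G} (hw : ∀ g ∈ w, g ∈ S) :
    invOrbSize act x₀ w ≤ invOrbGrowth act x₀ S w.length := by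
  refine le_csSup ⟨w.length + 1, ?_⟩ ⟨w, hw, rfl, rfl⟩
  rintro _ ⟨u, -, hu, rfl⟩
  exact hu ▸ invOrbSize_le_length_succ u

theorem reachBall_mono : Monotone (reachBall act x₀ S) := by
  rintro i j hij _ ⟨v, hvS, hvl, rfl⟩
  exact ⟨v, hvS, hvl.trans hij, rfl⟩

theorem act_mem_reachBall_succ (hm : ∀ x g g', act (act x g) g' = act x (g * g'))
    {j : ℕ} {x : X} (hx : x ∈ reachBall act x₀ S j) {s : G} (hs : s ∈ S) :
    act x s ∈ reachBall act x₀ S (j + 1) := by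
  obtain ⟨v, hvS, hvl, rfl⟩ := hx
  refine ⟨v ++ [s], ?_, by simpa using hvl, by simp [hm]⟩
  exact List.forall_mem_append.2 ⟨hvS, by simpa using hs⟩

theorem range_subset_reachBall (hm : ∀ x g g', act (act x g) g' = act x (g * g'))
    (hS : Submonoid.closure S = ⊤) {j : ℕ}
    (hstable : reachBall act x₀ S (j + 1) ⊆ reachBall act x₀ S j) :
    Set.range (act x₀) ⊆ reachBall act x₀ S j := by
  rintro _ ⟨g, rfl⟩
  induction g using Submonoid.induction_of_closure_eq_top_right hS with
  | one => exact ⟨[], by simp, by simp, rfl⟩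
  | mul_right g s hs ih => exact hm x₀ g s ▸ hstable (act_mem_reachBall_succ hm ih hs)

theorem succ_le_encard_reachBall_or_range_subset
    (hm : ∀ x g g', act (act x g) g' = act x (g * g')) (hS : Submonoid.closure S = ⊤) (j : ℕ) :
    (j + 1 : ℕ∞) ≤ (reachBall act x₀ S j).encard ∨ Set.range (act x₀) ⊆ reachBall act x₀ S j := by
  induction j with
  | zero =>
    have hx₀ : act x₀ 1 ∈ reachBall act x₀ S 0 := ⟨[], by simp, by simp, rfl⟩
    exact .inl (by simpa using Set.one_le_encard_iff_nonempty.2 ⟨_, hx₀⟩)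
  | succ j ih =>
    have hsub := reachBall_mono (act := act) (x₀ := x₀) (S := S) j.le_succ
    by_cases hstable : reachBall act x₀ S (j + 1) ⊆ reachBall act x₀ S j
    · exact .inr ((range_subset_reachBall hm hS hstable).trans hsub)
    obtain ⟨x, hx, hxj⟩ := Set.not_subset.1 hstable
    refine ih.imp (fun hcard => ?_) (·.trans hsub)
    calc ((j + 1 : ℕ) + 1 : ℕ∞) ≤ (reachBall act x₀ S j).encard + 1 := by push_cast; gcongr
      _ = (insert x (reachBall act x₀ S j)).encard := (Set.encard_insert_of_notMem hxj).symm
      _ ≤ _ := Set.encard_le_encard (Set.insert_subset hx hsub)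

theorem reachBall_card_not_subset (hm : ∀ x g g', act (act x g) g' = act x (g * g'))
    (hS : Submonoid.closure S = ⊤) (hinf : (Set.range (act x₀)).Infinite) (F : Finset X) :
    ¬ reachBall act x₀ S F.card ⊆ F := by
  intro hF
  rcases succ_le_encard_reachBall_or_range_subset hm hS F.card with hcard | hrange
  · have := hcard.trans ((Set.encard_le_encard hF).trans_eq (Set.encard_coe_eq_coe_finsetCard F))
    norm_cast at this
    omega
  · exact hinf (F.finite_toSet.subset (hrange.trans hF))

theorem exists_lt_invOrbSize_append (hm : ∀ x g g', act (act x g) g' = act x (g * g'))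
    (hS : Submonoid.closure S = ⊤) (hinf : (Set.range (act x₀)).Infinite) (w : List G) :
    ∃ v : List G, (∀ g ∈ v, g ∈ S) ∧ v.length ≤ invOrbSize act x₀ w ∧
      invOrbSize act x₀ w < invOrbSize act x₀ (v ++ w) := by
  let F := (invOrbit act x₀ w).image (act · w.prod⁻¹)
  obtain ⟨_, ⟨v, hvS, hvl, rfl⟩, hvF⟩ := Set.not_subset.1 (reachBall_card_not_subset hm hS hinf F)
  have hnew : act x₀ (v ++ w).prod ∉ invOrbit act x₀ w := fun h =>
    hvF (Finset.mem_image.2 ⟨_, h, by rw [hm, List.prod_append, mul_inv_cancel_right]⟩)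
  refine ⟨v, hvS, hvl.trans Finset.card_image_le, Finset.card_lt_card ?_⟩
  exact (Finset.ssubset_iff_of_subset (invOrbit_subset_append v w)).2
    ⟨_, act_prod_mem_invOrbit _, hnew⟩

theorem exists_length_le_triangle_and_le_invOrbSize
    (hm : ∀ x g g', act (act x g) g' = act x (g * g')) (hS : Submonoid.closure S = ⊤)
    (hinf : (Set.range (act x₀)).Infinite) (n : ℕ) :
    ∃ w : List G, (∀ g ∈ w, g ∈ S) ∧ w.length ≤ n * (n - 1) / 2 ∧ n ≤ invOrbSize act x₀ w := by
  induction n with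
  | zero => exact ⟨[], by simp, by simp, Nat.zero_le _⟩
  | succ n ih =>
    obtain ⟨w, hwS, hwl, hnw⟩ := ih
    rw [Nat.triangle_succ]
    by_cases hlt : n < invOrbSize act x₀ w
    · exact ⟨w, hwS, by omega, hlt⟩
    obtain ⟨v, hvS, hvl, hgrow⟩ := exists_lt_invOrbSize_append hm hS hinf w
    refine ⟨v ++ w, List.forall_mem_append.2 ⟨hvS, hwS⟩, ?_, by omega⟩
    rw [List.length_append]
    omega

theorem nonempty_of_range_infinite (hS : Submonoid.closure S = ⊤)
    (hinf : (Set.range (act x₀)).Infinite) : S.Nonempty := by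
  rw [Set.nonempty_iff_ne_empty]
  rintro rfl
  have htrivial (g : G) : g = 1 :=
    Submonoid.induction_of_closure_eq_top_right hS g rfl (fun _ _ hy _ => absurd hy id)
  exact hinf ((Set.finite_singleton (act x₀ 1)).subset (by rintro _ ⟨g, rfl⟩; simp [htrivial g]))

end

theorem invOrbGrowth_lower_bound_general {G X : Type*} [Group G] (act : X → G → X)
    (hm : ∀ x g g', act (act x g) g' = act x (g * g'))
    (S : Set G) (hS : Submonoid.closure S = ⊤) (x₀ : X)
    (hinf : Set.Infinite (Set.range fun g : G => act x₀ g)) :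
    ∀ n : ℕ, 1 ≤ n → n ≤ invOrbGrowth act x₀ S (n * (n - 1) / 2) := by
  intro n _
  obtain ⟨s, hs⟩ := nonempty_of_range_infinite hS hinf
  obtain ⟨w, hwS, hwl, hnw⟩ := exists_length_le_triangle_and_le_invOrbSize hm hS hinf n
  let padded := List.replicate (n * (n - 1) / 2 - w.length) s ++ w
  have hpadS : ∀ g ∈ padded, g ∈ S :=
    List.forall_mem_append.2 ⟨fun g hg => List.eq_of_mem_replicate hg ▸ hs, hwS⟩
  have hlen : padded.length = n * (n - 1) / 2 := by
    simp only [padded, List.length_append, List.length_replicate]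
    omega
  calc n ≤ invOrbSize act x₀ w := hnw
    _ ≤ invOrbSize act x₀ padded := invOrbSize_le_append _ w
    _ ≤ invOrbGrowth act x₀ S padded.length := invOrbSize_le_invOrbGrowth hpadS
    _ = _ := by rw [hlen]

/-- If the orbit of the basepoint `x₀` is infinite, then
`Δ(n(n-1)/2) ≥ n` for all `n ≥ 1`; in particular `Δ(n) ≳ √n`. -/
theorem invOrbGrowth_lower_bound {G X : Type*} [Group G] (act : X → G → X)
    (h1 : ∀ x, act x 1 = x) (hm : ∀ x g g', act (act x g) g' = act x (g * g'))
    (S : Set G) (hS : Submonoid.closure S = ⊤) (x₀ : X)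
    (hinf : Set.Infinite (Set.range fun g : G => act x₀ g)) :
    ∀ n : ℕ, 1 ≤ n → n ≤ invOrbGrowth act x₀ S (n * (n - 1) / 2) :=
  invOrbGrowth_lower_bound_general act hm S hS x₀ hinf
end

section
/- Let Δ : ℕ → ℕ be a function, and suppose there exist η ∈ (0,1) and C > 0 such that for every n ∈ ℕ there exist ℓ, m ∈ ℕ with ℓ + m ≤ η·n + C and Δ(n) ≤ Δ(ℓ) + Δ(m). Set α = log 2 / log(2/η). Then Δ(n) ≼ n^α, i.e., there exist constants L, N such that Δ(n) ≤ L·n^α for all n ≥ N. -/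
private lemma rpow_subadd' {x y α : ℝ} (hx : 0 ≤ x) (hy : 0 ≤ y) (hα : 0 ≤ α) (hα1 : α ≤ 1) :
    (x + y) ^ α ≤ x ^ α + y ^ α := by
  exact_mod_cast NNReal.rpow_add_le_add_rpow (⟨x, hx⟩) (⟨y, hy⟩) hα hα1

private lemma rpow_concave2' {x y α : ℝ} (hx : 0 ≤ x) (hy : 0 ≤ y) (hα : 0 ≤ α) (hα1 : α ≤ 1) :
    x ^ α + y ^ α ≤ 2 * (((x + y) / 2) ^ α) := by
  have hc : (1/2:ℝ) • (x^α) + (1/2:ℝ) • (y^α) ≤ ((1/2:ℝ)•x + (1/2:ℝ)•y)^α :=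
    (Real.concaveOn_rpow hα hα1).2 (Set.mem_Ici.2 hx) (Set.mem_Ici.2 hy)
      (by norm_num) (by norm_num) (by norm_num)
  simp only [smul_eq_mul] at hc
  have harg : (1/2 : ℝ) * x + (1/2 : ℝ) * y = (x+y)/2 := by ring
  rw [harg] at hc
  linarith

/-- If `Δ : ℕ → ℕ` satisfies: there are `η ∈ (0,1)` and `C > 0` such that for
every `n` there are `ℓ, m` with `ℓ + m ≤ η n + C` and `Δ(n) ≤ Δ(ℓ) + Δ(m)`,
then `Δ(n) ≼ n^α` for `α = log 2 / log(2/η)`: there are constants `L`, `N`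
with `Δ(n) ≤ L n^α` for all `n ≥ N`. -/
theorem growth_contraction_lemma (Δ : ℕ → ℕ) (η C : ℝ)
    (hη0 : 0 < η) (hη1 : η < 1) (hC : 0 < C)
    (h : ∀ n : ℕ, ∃ ℓ m : ℕ, ((ℓ : ℝ) + m ≤ η * n + C) ∧ Δ n ≤ Δ ℓ + Δ m) :
    ∃ L : ℝ, ∃ N : ℕ, ∀ n : ℕ, N ≤ n →
      (Δ n : ℝ) ≤ L * (n : ℝ) ^ (Real.log 2 / Real.log (2 / η)) := by
  obtain ⟨α, hαdef⟩ : ∃ α : ℝ, α = Real.log 2 / Real.log (2 / η) := ⟨_, rfl⟩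
  rw [← hαdef]
  have h2η : (1:ℝ) < 2 / η := by rw [lt_div_iff₀ hη0]; linarith
  have hlog : 0 < Real.log (2 / η) := Real.log_pos h2η
  have hα0 : 0 < α := hαdef ▸ div_pos (Real.log_pos one_lt_two) hlog
  have hα1 : α < 1 := by
    rw [hαdef, div_lt_one hlog]
    exact Real.log_lt_log two_pos (by rw [lt_div_iff₀ hη0]; linarith)
  have hkey : (η / 2) ^ α = 1 / 2 := by
    have h2 : (2 / η : ℝ) ^ α = 2 := by
      have := Real.rpow_logb (b := 2 / η) (x := 2) (by positivity) (ne_of_gt h2η)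
        (by norm_num)
      rw [Real.logb] at this
      rw [hαdef]
      exact this
    rw [show (η / 2 : ℝ) = (2 / η)⁻¹ from (inv_div 2 η).symm,
      Real.inv_rpow (by positivity), h2]
    norm_num
  obtain ⟨e, hedef⟩ : ∃ e : ℝ, e = η ^ α := ⟨_, rfl⟩
  have he0 : 0 < e := hedef ▸ Real.rpow_pos_of_pos hη0 α
  have he : e = 2 ^ α * (1 / 2) := by
    rw [hedef, show η = 2 * (η / 2) by ring,
      Real.mul_rpow (by norm_num) (by positivity), hkey]
  have he1 : e < 1 := by
    have h2a : (2:ℝ) ^ α < 2 ^ (1:ℝ) :=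
      Real.rpow_lt_rpow_of_exponent_lt one_lt_two hα1
    rw [Real.rpow_one] at h2a
    rw [he]; linarith
  have hCα : (0:ℝ) < C ^ α := Real.rpow_pos_of_pos hC α
  have hC2α : (0:ℝ) < (C / 2) ^ α := Real.rpow_pos_of_pos (by linarith) α
  -- choose N
  obtain ⟨R, hRdef⟩ : ∃ R : ℝ, R = max (max ((C + 1) / (1 - η))
      (((C ^ α + 1) / (1 - e)) ^ α⁻¹)) (max ((2 * ((C / 2) ^ α) + 2) ^ α⁻¹) 1) := ⟨_, rfl⟩
  obtain ⟨N, hNR⟩ : ∃ N : ℕ, R ≤ (N : ℝ) := ⟨⌈R⌉₊, Nat.le_ceil R⟩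
  have hN1 : (1:ℝ) ≤ (N : ℝ) := by
    refine le_trans ?_ hNR
    rw [hRdef]
    exact le_trans (le_max_right _ 1) (le_max_right _ _)
  have hNC : C < (1 - η) * (N : ℝ) := by
    have h1 : (C + 1) / (1 - η) ≤ (N : ℝ) := by
      refine le_trans ?_ hNR
      rw [hRdef]
      exact le_trans (le_max_left _ _) (le_max_left _ _)
    have h2 : C + 1 ≤ (1 - η) * (N : ℝ) := by
      rw [div_le_iff₀ (by linarith : (0:ℝ) < 1 - η)] at h1; linarith
    linarith
  have hNa2 : C ^ α + 1 ≤ (1 - e) * ((N:ℝ) ^ α) := by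
    have hM2nn : (0:ℝ) ≤ (C ^ α + 1) / (1 - e) :=
      div_nonneg (by linarith) (by linarith)
    have hM2N : ((C ^ α + 1) / (1 - e)) ^ α⁻¹ ≤ (N : ℝ) := by
      refine le_trans ?_ hNR
      rw [hRdef]
      exact le_trans (le_max_right _ _) (le_max_left _ _)
    have h1 : (((C ^ α + 1) / (1 - e)) ^ α⁻¹) ^ α ≤ (N:ℝ) ^ α :=
      Real.rpow_le_rpow (Real.rpow_nonneg hM2nn _) hM2N hα0.le
    rw [Real.rpow_inv_rpow hM2nn (ne_of_gt hα0)] at h1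
    rw [div_le_iff₀ (by linarith : (0:ℝ) < 1 - e)] at h1
    linarith
  have hNa3 : 2 * ((C / 2) ^ α) + 2 ≤ (N:ℝ) ^ α := by
    have hM3nn : (0:ℝ) ≤ 2 * ((C / 2) ^ α) + 2 := by positivity
    have hM3N : (2 * ((C / 2) ^ α) + 2) ^ α⁻¹ ≤ (N : ℝ) := by
      refine le_trans ?_ hNR
      rw [hRdef]
      exact le_trans (le_max_left _ _) (le_max_right _ _)
    have h1 : ((2 * ((C / 2) ^ α) + 2) ^ α⁻¹) ^ α ≤ (N:ℝ) ^ α :=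
      Real.rpow_le_rpow (Real.rpow_nonneg hM3nn _) hM3N hα0.le
    rwa [Real.rpow_inv_rpow hM3nn (ne_of_gt hα0)] at h1
  -- constants
  obtain ⟨B, hBdef⟩ : ∃ B : ℝ, B = (((Finset.range N).sup Δ : ℕ) : ℝ) := ⟨_, rfl⟩
  have hB0 : (0:ℝ) ≤ B := hBdef ▸ Nat.cast_nonneg _
  have hBb : ∀ k, k < N → (Δ k : ℝ) ≤ B := fun k hk =>
    hBdef ▸ Nat.cast_le.2 (Finset.le_sup (Finset.mem_range.2 hk))
  obtain ⟨L, hLdef⟩ : ∃ L : ℝ, L = B + 1 := ⟨_, rfl⟩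
  have hL0 : (0:ℝ) < L := by rw [hLdef]; linarith
  obtain ⟨G, hGdef⟩ : ∃ G : ℝ, G = 2 * L * ((C / 2) ^ α) := ⟨_, rfl⟩
  have hG0 : (0:ℝ) ≤ G := by rw [hGdef]; positivity
  -- main claim by strong induction
  have main : ∀ n : ℕ, N ≤ n → (Δ n : ℝ) ≤ L * ((n:ℝ) ^ α) - G := by
    intro n
    induction n using Nat.strong_induction_on with
    | _ n ih =>
      intro hNn
      obtain ⟨ℓ, m, hs, hd⟩ := h n
      have hNn' : (N:ℝ) ≤ (n:ℝ) := Nat.cast_le.2 hNn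
      have hnα : (N:ℝ) ^ α ≤ (n:ℝ) ^ α :=
        Real.rpow_le_rpow (Nat.cast_nonneg N) hNn' hα0.le
      have hsn : η * (n:ℝ) + C < (n:ℝ) := by
        have h1 : (1 - η) * (N:ℝ) ≤ (1 - η) * (n:ℝ) :=
          mul_le_mul_of_nonneg_left hNn' (by linarith)
        linarith
      have hℓs : ((ℓ:ℝ)) ≤ η * n + C := by
        have : (0:ℝ) ≤ (m:ℝ) := Nat.cast_nonneg m
        linarith
      have hms : ((m:ℝ)) ≤ η * n + C := by
        have : (0:ℝ) ≤ (ℓ:ℝ) := Nat.cast_nonneg ℓ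
        linarith
      have hℓn : ℓ < n := by exact_mod_cast lt_of_le_of_lt hℓs hsn
      have hmn : m < n := by exact_mod_cast lt_of_le_of_lt hms hsn
      have hdr : (Δ n : ℝ) ≤ (Δ ℓ : ℝ) + (Δ m : ℝ) := by exact_mod_cast hd
      have hsplitℓ : ((ℓ:ℝ)) ^ α ≤ e * ((n:ℝ) ^ α) + C ^ α := by
        calc ((ℓ:ℝ)) ^ α ≤ (η * n + C) ^ α :=
              Real.rpow_le_rpow (Nat.cast_nonneg ℓ) hℓs hα0.le
          _ ≤ (η * n) ^ α + C ^ α :=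
              rpow_subadd' (by positivity) hC.le hα0.le hα1.le
          _ = e * ((n:ℝ) ^ α) + C ^ α := by
              rw [Real.mul_rpow hη0.le (Nat.cast_nonneg n), hedef]
      have hsplitm : ((m:ℝ)) ^ α ≤ e * ((n:ℝ) ^ α) + C ^ α := by
        calc ((m:ℝ)) ^ α ≤ (η * n + C) ^ α :=
              Real.rpow_le_rpow (Nat.cast_nonneg m) hms hα0.le
          _ ≤ (η * n) ^ α + C ^ α :=
              rpow_subadd' (by positivity) hC.le hα0.le hα1.le
          _ = e * ((n:ℝ) ^ α) + C ^ α := by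
              rw [Real.mul_rpow hη0.le (Nat.cast_nonneg n), hedef]
      have hgap : C ^ α + 1 ≤ (1 - e) * ((n:ℝ) ^ α) := by
        have h1 : (1 - e) * ((N:ℝ) ^ α) ≤ (1 - e) * ((n:ℝ) ^ α) :=
          mul_le_mul_of_nonneg_left hnα (by linarith)
        linarith
      by_cases hℓN : N ≤ ℓ <;> by_cases hmN : N ≤ m
      · -- both large
        have iℓ := ih ℓ hℓn hℓN
        have im := ih m hmn hmN
        have hcc : ((ℓ:ℝ)) ^ α + ((m:ℝ)) ^ α ≤ 2 * ((((ℓ:ℝ) + m) / 2) ^ α) :=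
          rpow_concave2' (Nat.cast_nonneg ℓ) (Nat.cast_nonneg m) hα0.le hα1.le
        have hmono : (((ℓ:ℝ) + m) / 2) ^ α ≤ ((η * n + C) / 2) ^ α :=
          Real.rpow_le_rpow (by positivity) (by linarith) hα0.le
        have hsplit : ((η * n + C) / 2) ^ α ≤ (1/2) * ((n:ℝ) ^ α) + (C / 2) ^ α := by
          rw [show (η * (n:ℝ) + C) / 2 = (η/2) * n + C/2 by ring]
          calc ((η/2) * (n:ℝ) + C/2) ^ α ≤ ((η/2) * n) ^ α + (C/2) ^ α :=
                rpow_subadd' (by positivity) (by linarith) hα0.le hα1.le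
            _ = (1/2) * ((n:ℝ) ^ α) + (C/2) ^ α := by
                rw [Real.mul_rpow (by positivity) (Nat.cast_nonneg n), hkey]
        have p1 : L * (((ℓ:ℝ)) ^ α + ((m:ℝ)) ^ α) ≤
            L * (2 * ((((ℓ:ℝ) + m) / 2) ^ α)) :=
          mul_le_mul_of_nonneg_left hcc hL0.le
        have p2 : L * (2 * ((((ℓ:ℝ) + m) / 2) ^ α)) ≤
            L * (2 * (((η * n + C) / 2) ^ α)) :=
          mul_le_mul_of_nonneg_left (by linarith) hL0.le
        have p3 : L * (2 * (((η * n + C) / 2) ^ α)) ≤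
            L * (2 * ((1/2) * ((n:ℝ) ^ α) + (C / 2) ^ α)) :=
          mul_le_mul_of_nonneg_left (by linarith) hL0.le
        have hGeq : L * (2 * ((1/2) * ((n:ℝ) ^ α) + (C / 2) ^ α)) =
            L * ((n:ℝ) ^ α) + G := by rw [hGdef]; ring
        have hsum : L * (((ℓ:ℝ)) ^ α + ((m:ℝ)) ^ α) =
            L * (((ℓ:ℝ)) ^ α) + L * (((m:ℝ)) ^ α) := by ring
        linarith
      · -- ℓ large, m small
        have iℓ := ih ℓ hℓn hℓN
        have hBm := hBb m (not_le.1 hmN)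
        have p1 : L * (((ℓ:ℝ)) ^ α) ≤ L * (e * ((n:ℝ) ^ α) + C ^ α) :=
          mul_le_mul_of_nonneg_left hsplitℓ hL0.le
        have hq1 : L * (e * ((n:ℝ) ^ α) + C ^ α) =
            L * (e * ((n:ℝ) ^ α)) + L * (C ^ α) := by ring
        have p2 : L * (C ^ α + 1) ≤ L * ((1 - e) * ((n:ℝ) ^ α)) :=
          mul_le_mul_of_nonneg_left hgap hL0.le
        have hq2 : L * ((1 - e) * ((n:ℝ) ^ α)) =
            L * ((n:ℝ) ^ α) - L * (e * ((n:ℝ) ^ α)) := by ring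
        have hq3 : L * (C ^ α + 1) = L * (C ^ α) + L := by ring
        have hBL : B ≤ L := by rw [hLdef]; linarith
        linarith
      · -- m large, ℓ small
        have im := ih m hmn hmN
        have hBℓ := hBb ℓ (not_le.1 hℓN)
        have p1 : L * (((m:ℝ)) ^ α) ≤ L * (e * ((n:ℝ) ^ α) + C ^ α) :=
          mul_le_mul_of_nonneg_left hsplitm hL0.le
        have hq1 : L * (e * ((n:ℝ) ^ α) + C ^ α) =
            L * (e * ((n:ℝ) ^ α)) + L * (C ^ α) := by ring
        have p2 : L * (C ^ α + 1) ≤ L * ((1 - e) * ((n:ℝ) ^ α)) :=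
          mul_le_mul_of_nonneg_left hgap hL0.le
        have hq2 : L * ((1 - e) * ((n:ℝ) ^ α)) =
            L * ((n:ℝ) ^ α) - L * (e * ((n:ℝ) ^ α)) := by ring
        have hq3 : L * (C ^ α + 1) = L * (C ^ α) + L := by ring
        have hBL : B ≤ L := by rw [hLdef]; linarith
        linarith
      · -- both small
        have hBℓ := hBb ℓ (not_le.1 hℓN)
        have hBm := hBb m (not_le.1 hmN)
        have p1 : L * (2 * ((C / 2) ^ α) + 2) ≤ L * ((n:ℝ) ^ α) :=
          mul_le_mul_of_nonneg_left (le_trans hNa3 hnα) hL0.le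
        have hq1 : L * (2 * ((C / 2) ^ α) + 2) = G + 2 * L := by rw [hGdef]; ring
        have hBL : B ≤ L := by rw [hLdef]; linarith
        linarith
  refine ⟨L, N, fun n hn => ?_⟩
  have h1 := main n hn
  linarith
end

section
/- Let M be the 3×3 nonnegative integer matrix with rows (1,2,0), (1,0,2), (1,0,0). Then the characteristic polynomial of M is X³ − X² − 2X − 4, and there exists a constant C such that the vector norm of (2,2,2)·Mⁿ·(0,0,1)ᵀ is at most C·(2/η)ⁿ for all n, where 2/η is the unique positive real root of X³−X²−2X−4. -/
/-!
`ρ = 2/η` is the Perron root of `M`, with positive eigenvector `w = (ρ², ρ + 2, ρ)`. Since `M` has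
nonnegative entries, `Mⁿ` is monotone, and `(0,0,1) ≤ w` because `ρ ≥ 1`; hence
`Mⁿ (0,0,1) ≤ Mⁿ w = ρⁿ w`, and pairing with `(2,2,2)` gives the bound with `c = (2,2,2) · w`.
-/

open Polynomial

namespace Matrix

variable {n R : Type*} [Fintype n] [CommSemiring R] [PartialOrder R] [IsOrderedRing R]

theorem mulVec_le_mulVec_of_nonneg {M : Matrix n n R} (hM : ∀ i j, 0 ≤ M i j) {v w : n → R}
    (hvw : v ≤ w) : M *ᵥ v ≤ M *ᵥ w :=
  fun i => dotProduct_le_dotProduct_of_nonneg_left hvw (hM i)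

theorem pow_mulVec_le_of_mulVec_le_smul [DecidableEq n] {M : Matrix n n R}
    (hM : ∀ i j, 0 ≤ M i j) {v w : n → R} {ρ : R} (hρ : 0 ≤ ρ) (hw : M *ᵥ w ≤ ρ • w)
    (hvw : v ≤ w) (k : ℕ) : (M ^ k) *ᵥ v ≤ ρ ^ k • w := by
  induction k with
  | zero => simpa using hvw
  | succ k ih =>
    calc (M ^ (k + 1)) *ᵥ v = M *ᵥ ((M ^ k) *ᵥ v) := by rw [pow_succ', ← mulVec_mulVec]
      _ ≤ M *ᵥ (ρ ^ k • w) := mulVec_le_mulVec_of_nonneg hM ih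
      _ = ρ ^ k • (M *ᵥ w) := mulVec_smul M _ w
      _ ≤ ρ ^ k • (ρ • w) := smul_le_smul_of_nonneg_left hw (pow_nonneg hρ k)
      _ = ρ ^ (k + 1) • w := by rw [smul_smul, pow_succ]

end Matrix

open Matrix

theorem charpoly_substitutionMatrix {R : Type*} [CommRing R] :
    (!![1, 2, 0; 1, 0, 2; 1, 0, 0] : Matrix (Fin 3) (Fin 3) R).charpoly
      = X ^ 3 - X ^ 2 - C 2 * X - C 4 := by
  have h4 : (C 4 : R[X]) = C 2 * C 2 := by rw [← C_mul]; norm_num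
  simp [charpoly, charmatrix, det_fin_three, h4]
  ring

theorem substitutionMatrix_mulVec_perronVector {R : Type*} [CommRing R] {ρ : R}
    (hρ : ρ ^ 3 = ρ ^ 2 + 2 * ρ + 4) :
    (!![1, 2, 0; 1, 0, 2; 1, 0, 0] : Matrix (Fin 3) (Fin 3) R) *ᵥ ![ρ ^ 2, ρ + 2, ρ]
      = ρ • ![ρ ^ 2, ρ + 2, ρ] := by
  ext i
  fin_cases i <;>
    simp only [mulVec, dotProduct, Fin.sum_univ_three, of_apply, cons_val', cons_val_fin_one,
      cons_val_zero, cons_val_one, cons_val, Pi.smul_apply, smul_eq_mul, one_mul, zero_mul,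
      add_zero, Fin.isValue, Fin.zero_eta, Fin.mk_one, Fin.reduceFinMk]
  · linear_combination -hρ
  · ring
  · ring

theorem pos_and_le_one_of_cubic_eq_zero {η : ℝ} (hη : η ^ 3 + η ^ 2 + η - 2 = 0) :
    0 < η ∧ η ≤ 1 := by
  constructor <;> nlinarith [sq_nonneg η, sq_nonneg (η + 1), sq_nonneg (η - 1)]

open Polynomial in
/-- Let `M` be the matrix with rows `(1,2,0), (1,0,2), (1,0,0)`. Its
characteristic polynomial is `X³ - X² - 2X - 4`, and there is a constant `C`
such that `(2,2,2)·Mⁿ·(0,0,1)ᵀ ≤ C (2/η)ⁿ` for all `n`, where `η` is the real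
root of `X³ + X² + X - 2` (so `2/η` is the unique positive real root of
`X³ - X² - 2X - 4`). -/
theorem substitution_matrix_growth (η : ℝ) (hη : η ^ 3 + η ^ 2 + η - 2 = 0) :
    (Matrix.charpoly (!![1, 2, 0; 1, 0, 2; 1, 0, 0] : Matrix (Fin 3) (Fin 3) ℝ)
        = X ^ 3 - X ^ 2 - C 2 * X - C 4) ∧
    ∃ c : ℝ, 0 < c ∧ ∀ n : ℕ,
      dotProduct ![2, 2, 2]
          (((!![1, 2, 0; 1, 0, 2; 1, 0, 0] : Matrix (Fin 3) (Fin 3) ℝ) ^ n).mulVec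
            ![0, 0, 1])
        ≤ c * (2 / η) ^ n := by
  refine ⟨charpoly_substitutionMatrix, ?_⟩
  obtain ⟨hη_pos, hη_le_one⟩ := pos_and_le_one_of_cubic_eq_zero hη
  set ρ := 2 / η
  have hρ_ge_one : 1 ≤ ρ := (one_le_div hη_pos).2 (by linarith)
  have hρ_cubic : ρ ^ 3 = ρ ^ 2 + 2 * ρ + 4 := by
    simp only [ρ]
    field_simp
    linear_combination -4 * hη
  have hM : ∀ i j, 0 ≤ (!![1, 2, 0; 1, 0, 2; 1, 0, 0] : Matrix (Fin 3) (Fin 3) ℝ) i j := by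
    intro i j
    fin_cases i <;> fin_cases j <;> norm_num
  have hdom : ![0, 0, 1] ≤ ![ρ ^ 2, ρ + 2, ρ] := by
    intro i
    fin_cases i <;>
      simp only [Fin.isValue, Fin.zero_eta, Fin.mk_one, Fin.reduceFinMk, cons_val_zero,
        cons_val_one, cons_val] <;>
      nlinarith
  refine ⟨![2, 2, 2] ⬝ᵥ ![ρ ^ 2, ρ + 2, ρ], ?_, fun k => ?_⟩
  · simp only [dotProduct, Fin.sum_univ_three, Fin.isValue, cons_val_zero, cons_val_one, cons_val]
    positivity
  calc _ ≤ ![2, 2, 2] ⬝ᵥ (ρ ^ k • ![ρ ^ 2, ρ + 2, ρ]) :=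
        dotProduct_le_dotProduct_of_nonneg_left
          (pow_mulVec_le_of_mulVec_le_smul hM (by positivity)
            (substitutionMatrix_mulVec_perronVector hρ_cubic).le hdom k)
          (by intro i; fin_cases i <;> norm_num)
    _ = _ := by rw [dotProduct_smul, smul_eq_mul, mul_comm]
end

section
/- Let G act on the right on X with basepoint x₀, let A be a group, and let W = (⊕_X A) ⋊ G. Write elements of W as pairs g·f with g ∈ G and f : X → A finitely supported, with product (g₁f₁)(g₂f₂) = g₁g₂·(g₂⁻¹·f₁)f₂. If v = a₁g₁ a₂g₂ ⋯ a_ℓ g_ℓ where each a_i ∈ A is embedded at the basepoint x₀ and g_i ∈ G, and v = g_v f_v, then g_v = g₁g₂⋯g_ℓ and the support of f_v is contained in {x₀·g_ℓ, x₀·(g_{ℓ-1}g_ℓ), …, x₀·(g₁g₂⋯g_ℓ)}. -/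
/-- Elements of the permutational wreath product `W = (⊕_X A) ⋊ G`, written in
the form `g·f` with `g ∈ G` and `f : X → A`, with product
`(g₁f₁)(g₂f₂) = g₁g₂·(g₂⁻¹·f₁)f₂`, where `(g·f)(x) = f(x·g)`. -/
def wrMul {G X A : Type*} [Group G] [Group A] (act : X → G → X)
    (p q : G × (X → A)) : G × (X → A) :=
  (p.1 * q.1, fun x => p.2 (act x q.1⁻¹) * q.2 x)

/-- The identity element of `W`. -/
def wrOne {G X A : Type*} [Group G] [Group A] : G × (X → A) := (1, fun _ => 1)

/-- The element `a ∈ A` embedded at the basepoint `x₀`. -/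
def wrEmb {G X A : Type*} [Group G] [Group A] [DecidableEq X] (x₀ : X) (a : A) :
    G × (X → A) := (1, fun x => if x = x₀ then a else 1)

/-- The element `g ∈ G` embedded in `W`. -/
def wrG {G X A : Type*} [Group G] [Group A] (g : G) : G × (X → A) :=
  (g, fun _ => 1)

theorem wreath_aux {G X A : Type*} [Group G] [Group A] [DecidableEq X]
    (act : X → G → X)
    (h1 : ∀ x, act x 1 = x) (hm : ∀ x g g', act (act x g) g' = act x (g * g'))
    (x₀ : X) (l : List (A × G)) :
    ((l.map fun p => wrMul act (wrEmb x₀ p.1) (wrG p.2)).foldr (wrMul act) wrOne).1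
        = (l.map Prod.snd).prod ∧
      Function.mulSupport
          ((l.map fun p => wrMul act (wrEmb x₀ p.1) (wrG p.2)).foldr (wrMul act) wrOne).2 ⊆
        {x : X | ∃ i : ℕ, i < l.length ∧ x = act x₀ (((l.map Prod.snd).drop i).prod)} := by
  induction l with
  | nil =>
    refine ⟨rfl, fun x hx => absurd rfl hx⟩
  | cons p l ih =>
    obtain ⟨ih1, ih2⟩ := ih
    set v' := (l.map fun p => wrMul act (wrEmb x₀ p.1) (wrG p.2)).foldr (wrMul act) wrOne with hv'
    constructor
    · simp only [List.map_cons, List.foldr_cons, ← hv']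
      simp only [wrMul, wrEmb, wrG, List.prod_cons, ih1, one_mul]
    · intro x hx
      simp only [List.map_cons, List.foldr_cons, ← hv'] at hx
      simp only [wrMul, wrEmb, wrG, Function.mem_mulSupport] at hx
      by_cases hv : v'.2 x = 1
      · rw [hv, mul_one, mul_one] at hx
        have hcond : act (act x v'.1⁻¹) p.2⁻¹ = x₀ := by
          by_contra hc
          rw [if_neg hc] at hx
          exact hx rfl
        refine ⟨0, Nat.succ_pos _, ?_⟩
        simp only [List.map_cons, List.drop_zero, List.prod_cons, ← ih1]
        rw [hm] at hcond
        rw [← hcond, hm, mul_assoc, inv_mul_cancel_left, inv_mul_cancel, h1]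
      · obtain ⟨i, hi, hxi⟩ := ih2 hv
        exact ⟨i + 1, Nat.succ_lt_succ hi, by simpa using hxi⟩


/-- If `v = a₁g₁ a₂g₂ ⋯ a_ℓ g_ℓ` in the permutational wreath product, with each
`a_i ∈ A` embedded at the basepoint `x₀`, and `v = g_v f_v`, then
`g_v = g₁ g₂ ⋯ g_ℓ` and the support of `f_v` is contained in the inverted orbit
`{x₀·g_ℓ, x₀·(g_{ℓ-1}g_ℓ), …, x₀·(g₁g₂⋯g_ℓ)}`. -/
theorem wreath_word_support {G X A : Type*} [Group G] [Group A] [DecidableEq X]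
    (act : X → G → X)
    (h1 : ∀ x, act x 1 = x) (hm : ∀ x g g', act (act x g) g' = act x (g * g'))
    (x₀ : X) (l : List (A × G)) :
    let v := (l.map fun p => wrMul act (wrEmb x₀ p.1) (wrG p.2)).foldr (wrMul act) wrOne
    let gs := l.map Prod.snd
    v.1 = gs.prod ∧
      Function.mulSupport v.2 ⊆
        {x : X | ∃ i : ℕ, i < l.length ∧ x = act x₀ ((gs.drop i).prod)} := by
  exact wreath_aux act h1 hm x₀ l
end
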